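/- arXiv:1308.6689 — 2 statements merged into one kernel-verified Lean document; each statement's English description precedes it below -/
import Mathlib

section
/- For any connected nontrivial graph G and any empty (edgeless) graph H, dim_l(G ⊙ H) = dim_l(G). -/
open SimpleGraph

/-- A set `S` is a local metric generator for `G` if every pair of adjacent
vertices is distinguished (by distance) by some element of `S`. -/
def IsLocalMetricGenerator {α : Type*} (G : SimpleGraph α) (S : Set α) : Prop :=
  ∀ x y : α, G.Adj x y → ∃ v ∈ S, G.dist v x ≠ G.dist v y

/-- The local metric dimension of a graph. -/
noncomputable def localMetricDim {α : Type*} (G : SimpleGraph α) : ℕ :=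
  sInf {k | ∃ S : Finset α, S.card = k ∧ IsLocalMetricGenerator G ↑S}

/-- A local metric basis: a minimum-cardinality local metric generator. -/
def IsLocalMetricBasis {α : Type*} (G : SimpleGraph α) (S : Finset α) : Prop :=
  IsLocalMetricGenerator G ↑S ∧ S.card = localMetricDim G

/-- The corona product `G ⊙ H`. -/
def corona {α β : Type*} (G : SimpleGraph α) (H : SimpleGraph β) :
    SimpleGraph (α ⊕ α × β) :=
  SimpleGraph.fromRel (fun x y => match x, y with
    | Sum.inl a, Sum.inl a' => G.Adj a a'
    | Sum.inl a, Sum.inr p => a = p.1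
    | Sum.inr p, Sum.inl a => a = p.1
    | Sum.inr p, Sum.inr q => p.1 = q.1 ∧ H.Adj p.2 q.2)

/-- The join `K₁ + H`; the vertex of `K₁` is `none`. -/
def joinK1 {β : Type*} (H : SimpleGraph β) : SimpleGraph (Option β) :=
  SimpleGraph.fromRel (fun x y => match x, y with
    | none, some _ => True
    | some b, some b' => H.Adj b b'
    | _, _ => False)

/-- Eccentricity of a vertex (in `ℕ∞`). -/
noncomputable def ecc {α : Type*} (G : SimpleGraph α) (x : α) : ℕ∞ :=
  ⨆ y, G.edist x y

/-- Radius of a graph (in `ℕ∞`). -/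
noncomputable def gradius {α : Type*} (G : SimpleGraph α) : ℕ∞ :=
  ⨅ x, ecc G x

/-- Diameter of a graph (in `ℕ∞`). -/
noncomputable def gdiam {α : Type*} (G : SimpleGraph α) : ℕ∞ :=
  ⨆ x, ecc G x

/-
`G` sits isometrically inside `G ⊙ H`, and a vertex `(a, b)` of the copy of `H`
attached to `a` is at distance `d(a, x) + 1` from every vertex `x` of `G`. Hence projecting a
local metric generator of `G ⊙ H` to `G` gives one of `G`. Conversely, when `H` is edgeless, the
only new edges join `a` to the pendant vertices `(a, b)`, and any vertex `s` of `G` distinguishes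
them (its distances to the two ends differ by one); so a local metric generator of `G`, which is
nonempty as soon as `G` has an edge, is one of `G ⊙ H`.
-/

section LocalMetricDim

variable {α : Type*} (G : SimpleGraph α)

theorem isLocalMetricGenerator_univ : IsLocalMetricGenerator G Set.univ := fun x y hxy =>
  ⟨x, trivial, by rw [dist_self, dist_eq_one_iff_adj.mpr hxy]; decide⟩

variable {G}

theorem localMetricDim_le_card {S : Finset α} (hS : IsLocalMetricGenerator G S) :
    localMetricDim G ≤ S.card :=
  Nat.sInf_le ⟨S, rfl, hS⟩

theorem IsLocalMetricGenerator.exists_isLocalMetricBasis {S : Finset α}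
    (hS : IsLocalMetricGenerator G S) : ∃ B, IsLocalMetricBasis G B := by
  obtain ⟨B, hcard, hB⟩ :=
    Nat.sInf_mem (s := {k | ∃ S : Finset α, S.card = k ∧ IsLocalMetricGenerator G ↑S})
      ⟨S.card, S, rfl, hS⟩
  exact ⟨B, hB, hcard⟩

end LocalMetricDim

namespace Corona

variable {α β : Type*} {G : SimpleGraph α} {H : SimpleGraph β}

theorem adj_inl_inl {a a' : α} : (corona G H).Adj (.inl a) (.inl a') ↔ G.Adj a a' := by
  simp only [corona, fromRel_adj, ne_eq, Sum.inl.injEq]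
  exact ⟨fun ⟨_, h⟩ => h.elim id fun h => h.symm, fun h => ⟨h.ne, .inl h⟩⟩

theorem adj_inl_inr {a : α} {p : α × β} : (corona G H).Adj (.inl a) (.inr p) ↔ a = p.1 := by
  simp [corona, fromRel_adj]

theorem adj_inr_inr {p q : α × β} :
    (corona G H).Adj (.inr p) (.inr q) ↔ p.1 = q.1 ∧ H.Adj p.2 q.2 := by
  simp only [corona, fromRel_adj, ne_eq, Sum.inr.injEq]
  refine ⟨fun ⟨_, h⟩ => h.elim id fun h => ⟨h.1.symm, h.2.symm⟩, fun h => ⟨?_, .inl h⟩⟩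
  rintro rfl
  exact h.2.ne rfl

def proj : α ⊕ α × β → α := Sum.elim id Prod.fst

theorem proj_eq_or_adj_of_adj {u v : α ⊕ α × β} (h : (corona G H).Adj u v) :
    proj u = proj v ∨ G.Adj (proj u) (proj v) := by
  rcases u with a | p <;> rcases v with a' | q
  · exact .inr (adj_inl_inl.mp h)
  · exact .inl (adj_inl_inr.mp h)
  · exact .inl (adj_inl_inr.mp h.symm).symm
  · exact .inl (adj_inr_inr.mp h).1

theorem dist_proj_le_length {u v : α ⊕ α × β} (w : (corona G H).Walk u v) :
    G.dist (proj u) (proj v) ≤ w.length := by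
  suffices ∃ w' : G.Walk (proj u) (proj v), w'.length ≤ w.length from
    this.elim fun w' hw' => (dist_le w').trans hw'
  induction w with
  | nil => exact ⟨.nil, le_rfl⟩
  | cons h _ ih =>
    obtain ⟨w', hw'⟩ := ih
    rcases proj_eq_or_adj_of_adj h with heq | hadj
    · exact ⟨w'.copy heq.symm rfl, by simp only [Walk.length_copy, Walk.length_cons]; omega⟩
    · exact ⟨.cons hadj w', by simp only [Walk.length_cons]; omega⟩

/-- Every walk from a vertex `(a, b)` to `G` has to step from a copy of `H` down to `G`, a step
that does not move the projection. -/
theorem dist_add_one_le_length {u v : α ⊕ α × β} (w : (corona G H).Walk u v) :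
    ∀ p a, u = .inr p → v = .inl a → G.dist p.1 a + 1 ≤ w.length := by
  induction w with
  | nil => rintro p a rfl ⟨⟩
  | @cons u b v h w ih =>
    rintro p a rfl rfl
    rcases b with c | q
    · obtain rfl := (adj_inl_inr.mp h.symm)
      simpa [proj] using dist_proj_le_length w
    · have := ih q a rfl rfl
      rw [(adj_inr_inr.mp h).1]
      simp only [Walk.length_cons]
      omega

variable (H) (hG : G.Connected)
include hG

def inlHom : G →g corona G H := ⟨Sum.inl, adj_inl_inl.mpr⟩

theorem dist_inl_inl (a a' : α) : (corona G H).dist (.inl a) (.inl a') = G.dist a a' := by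
  obtain ⟨w, hw⟩ := (hG a a').exists_walk_length_eq_dist
  have hreach : (corona G H).Reachable (.inl a) (.inl a') := (hG a a').map (inlHom H)
  obtain ⟨w', hw'⟩ := hreach.exists_walk_length_eq_dist
  refine le_antisymm ?_ (hw' ▸ dist_proj_le_length w')
  exact (dist_le (w.map (inlHom H))).trans_eq (by rw [Walk.length_map, hw])

theorem dist_inr_inl (p : α × β) (a : α) :
    (corona G H).dist (.inr p) (.inl a) = G.dist p.1 a + 1 := by
  have hadj : (corona G H).Adj (.inr p) (.inl p.1) := (adj_inl_inr.mpr rfl).symm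
  obtain ⟨w, hw⟩ := (hG p.1 a).exists_walk_length_eq_dist
  have hreach : (corona G H).Reachable (.inr p) (.inl a) :=
    hadj.reachable.trans ((hG p.1 a).map (inlHom H))
  obtain ⟨w', hw'⟩ := hreach.exists_walk_length_eq_dist
  refine le_antisymm ?_ (hw' ▸ dist_add_one_le_length w' p a rfl rfl)
  exact (dist_le (.cons hadj (w.map (inlHom H)))).trans_eq
    (congrArg (· + 1) ((Walk.length_map _ _).trans hw))

theorem dist_inl_inr (a : α) (p : α × β) :
    (corona G H).dist (.inl a) (.inr p) = G.dist a p.1 + 1 := by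
  rw [dist_comm, dist_inr_inl H hG, dist_comm]

end Corona

section Generators

open Corona

variable {α β : Type*} {G : SimpleGraph α}

theorem IsLocalMetricGenerator.proj_image {H : SimpleGraph β} (hG : G.Connected)
    {T : Set (α ⊕ α × β)} (hT : IsLocalMetricGenerator (corona G H) T) :
    IsLocalMetricGenerator G (proj '' T) := by
  intro x y hxy
  obtain ⟨v, hvT, hv⟩ := hT _ _ (adj_inl_inl.mpr hxy)
  refine ⟨proj v, Set.mem_image_of_mem _ hvT, ?_⟩
  rcases v with a | p
  · rwa [dist_inl_inl H hG, dist_inl_inl H hG] at hv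
  · rw [dist_inr_inl H hG, dist_inr_inl H hG] at hv
    exact fun h => hv (congrArg (· + 1) h)

theorem IsLocalMetricGenerator.inl_image_corona_bot (hG : G.Connected) {S : Set α}
    (hS : IsLocalMetricGenerator G S) (hne : S.Nonempty) :
    IsLocalMetricGenerator (corona G (⊥ : SimpleGraph β)) (Sum.inl '' S) := by
  obtain ⟨s, hs⟩ := hne
  have pendant (p : α × β) : (corona G (⊥ : SimpleGraph β)).dist (.inl s) (.inr p) ≠
      (corona G (⊥ : SimpleGraph β)).dist (.inl s) (.inl p.1) := by
    rw [dist_inl_inr _ hG, dist_inl_inl _ hG]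
    omega
  rintro (a | p) (a' | q) hxy
  · obtain ⟨v, hvS, hv⟩ := hS a a' (adj_inl_inl.mp hxy)
    refine ⟨.inl v, Set.mem_image_of_mem _ hvS, ?_⟩
    rwa [dist_inl_inl _ hG, dist_inl_inl _ hG]
  · obtain rfl := adj_inl_inr.mp hxy
    exact ⟨.inl s, Set.mem_image_of_mem _ hs, (pendant q).symm⟩
  · obtain rfl := adj_inl_inr.mp hxy.symm
    exact ⟨.inl s, Set.mem_image_of_mem _ hs, pendant p⟩
  · exact (adj_inr_inr.mp hxy).2.elim

end Generators

theorem stmt3_general {α β : Type*} [Fintype α] (G : SimpleGraph α)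
    (hG : G.Connected) (hnt : Nontrivial α) :
    localMetricDim (corona G (⊥ : SimpleGraph β)) = localMetricDim G := by
  classical
  obtain ⟨S, hS, hScard⟩ :=
    (Finset.coe_univ (α := α) ▸ isLocalMetricGenerator_univ G).exists_isLocalMetricBasis
  obtain ⟨a, b, hab⟩ : ∃ a b, G.Adj a b :=
    ⟨_, hG.preconnected.exists_adj_of_nontrivial (Classical.arbitrary α)⟩
  obtain ⟨s, hs, -⟩ := hS a b hab
  have hCS : IsLocalMetricGenerator (corona G (⊥ : SimpleGraph β))
      ↑(S.image (Sum.inl : α → α ⊕ α × β)) := by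
    rw [Finset.coe_image]
    exact hS.inl_image_corona_bot hG ⟨s, hs⟩
  obtain ⟨T, hT, hTcard⟩ := hCS.exists_isLocalMetricBasis
  apply le_antisymm
  · calc localMetricDim (corona G ⊥) ≤ (S.image Sum.inl).card := localMetricDim_le_card hCS
      _ = localMetricDim G := by rw [Finset.card_image_of_injective _ Sum.inl_injective, hScard]
  · calc localMetricDim G ≤ (T.image Corona.proj).card :=
          localMetricDim_le_card (by rw [Finset.coe_image]; exact hT.proj_image hG)
      _ ≤ localMetricDim (corona G ⊥) := Finset.card_image_le.trans hTcard.le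

/-- For a connected nontrivial graph `G` and empty graph `H`,
`dim_l (G ⊙ H) = dim_l G`. -/
theorem stmt3 {α β : Type*} [Fintype α] [Fintype β] (G : SimpleGraph α)
    (hG : G.Connected) (hnt : Nontrivial α) :
    localMetricDim (corona G (⊥ : SimpleGraph β)) = localMetricDim G :=
  stmt3_general G hG hnt
end

section
/- Let H be a non-empty graph such that the vertex of K_1 belongs to some local metric basis for the join K_1 + H. Then for any connected graph G of order n ≥ 2, dim_l(G ⊙ H) = n · (dim_l(K_1 + H) − 1). -/
open SimpleGraph

/-! In `G ⊙ H` the vertex `inl a` separates the copy `{a} × H` from the rest of the graph, so a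
vertex outside the copy is equidistant from any two of its leaves; inside the copy, distances are
those of `K₁ + H`, with `inl a` in the role of the `K₁` vertex. Hence a local metric generator of
`G ⊙ H` meets every copy in a set which, together with the `K₁` vertex, generates `K₁ + H`; this
gives `n (dim_l (K₁ + H) - 1)` as a lower bound. Conversely, if a local metric basis `S` of
`K₁ + H` contains the `K₁` vertex, the other vertices of `S` copied into every copy resolve the
edges inside the copies, and an edge at `inl a` is resolved by such a vertex in another copy. -/

section

variable {α β V W : Type*}

section Adjacency
variable {G : SimpleGraph α} {H : SimpleGraph β}

@[simp] lemma corona_adj_inl_inl {a a' : α} :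
    (corona G H).Adj (.inl a) (.inl a') ↔ G.Adj a a' := by
  simpa [corona, adj_comm] using Adj.ne

@[simp] lemma corona_adj_inl_inr {a : α} {p : α × β} :
    (corona G H).Adj (.inl a) (.inr p) ↔ a = p.1 := by
  simp [corona]

@[simp] lemma corona_adj_inr_inl {a : α} {p : α × β} :
    (corona G H).Adj (.inr p) (.inl a) ↔ a = p.1 := by
  simp [corona]

@[simp] lemma corona_adj_inr_inr {p q : α × β} :
    (corona G H).Adj (.inr p) (.inr q) ↔ p.1 = q.1 ∧ H.Adj p.2 q.2 := by
  simp only [corona, fromRel_adj, ne_eq, Sum.inr.injEq]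
  refine ⟨?_, fun h => ⟨fun e => h.2.ne (congrArg Prod.snd e), .inl h⟩⟩
  rintro ⟨-, h | ⟨h₁, h₂⟩⟩
  exacts [h, ⟨h₁.symm, h₂.symm⟩]

@[simp] lemma joinK1_adj_none {b : Option β} : (joinK1 H).Adj none b ↔ b.isSome := by
  cases b <;> simp [joinK1]

@[simp] lemma joinK1_adj_none_right {b : Option β} : (joinK1 H).Adj b none ↔ b.isSome := by
  rw [adj_comm, joinK1_adj_none]

@[simp] lemma joinK1_adj_some_some {b b' : β} :
    (joinK1 H).Adj (some b) (some b') ↔ H.Adj b b' := by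
  simpa [joinK1, adj_comm] using Adj.ne

end Adjacency

namespace SimpleGraph
variable {G : SimpleGraph V}

theorem edist_eq_edist_add_edist_of_forall_adj {C : Set V} {z w y : V}
    (hC : ∀ ⦃u v⦄, G.Adj u v → u ∉ C → v ∈ C → u = z) (hw : w ∉ C) (hy : y ∈ C) :
    G.edist w y = G.edist w z + G.edist z y := by
  refine le_antisymm G.edist_triangle ?_
  suffices ∀ {w} (p : G.Walk w y), w ∉ C → G.edist w z + G.edist z y ≤ p.length by
    by_cases hr : G.Reachable w y
    · obtain ⟨p, hp⟩ := hr.exists_walk_length_eq_edist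
      exact hp ▸ this p hw
    · simp [edist_eq_top_of_not_reachable hr]
  intro w p hw
  induction p with
  | nil => exact absurd hy hw
  | @cons u v y huv p ih =>
    by_cases hv : v ∈ C
    · obtain rfl := hC huv hw hv
      simpa using edist_le (.cons huv p)
    · calc G.edist u z + G.edist z y ≤ G.edist u v + G.edist v z + G.edist z y := by
            gcongr; exact G.edist_triangle
        _ ≤ 1 + p.length := by
            rw [edist_eq_one_iff_adj.mpr huv, add_assoc]; gcongr; exact ih hy hv
        _ = (Walk.cons huv p).length := by simp [add_comm]

lemma dist_eq_dist_of_commonNeighbors_nonempty {G' : SimpleGraph W} {x y : V} {x' y' : W}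
    (h : (G.commonNeighbors x y).Nonempty) (h' : (G'.commonNeighbors x' y').Nonempty)
    (heq : x = y ↔ x' = y') (hadj : G.Adj x y ↔ G'.Adj x' y') : G.dist x y = G'.dist x' y' := by
  refine congrArg ENat.toNat ?_
  by_cases hxy : x = y
  · simp [hxy, heq.mp hxy]
  by_cases hxy' : G.Adj x y
  · rw [edist_eq_one_iff_adj.mpr hxy', edist_eq_one_iff_adj.mpr (hadj.mp hxy')]
  rw [edist_eq_two_iff.mpr ⟨hxy, hxy', h⟩,
    edist_eq_two_iff.mpr ⟨mt heq.mpr hxy, mt hadj.mpr hxy', h'⟩]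

end SimpleGraph

section CoronaMetric
variable {G : SimpleGraph α} {H : SimpleGraph β}

lemma joinK1_dist_none_some (b : β) : (joinK1 H).dist none (some b) = 1 :=
  dist_eq_one_iff_adj.mpr (by simp)

lemma corona_dist_inr_inr (a : α) (b c : β) :
    (corona G H).dist (.inr (a, b)) (.inr (a, c)) = (joinK1 H).dist (some b) (some c) :=
  dist_eq_dist_of_commonNeighbors_nonempty ⟨.inl a, by simp [mem_commonNeighbors]⟩
    ⟨none, by simp [mem_commonNeighbors]⟩ (by simp) (by simp)

lemma corona_edist_inr {a : α} {w : α ⊕ α × β} (hw : ∀ c, w ≠ .inr (a, c)) (b : β) :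
    (corona G H).edist w (.inr (a, b)) = (corona G H).edist w (.inl a) + 1 := by
  have hgate : ∀ ⦃u v⦄, (corona G H).Adj u v → u ∉ Set.range (fun c => .inr (a, c)) →
      v ∈ Set.range (fun c => .inr (a, c)) → u = .inl a := by
    rintro (a' | q) _ huv hu ⟨c, rfl⟩
    · simp_all
    · simp only [corona_adj_inr_inr] at huv
      exact absurd ⟨q.2, congrArg Sum.inr (Prod.ext huv.1.symm rfl)⟩ hu
  rw [edist_eq_edist_add_edist_of_forall_adj (y := .inr (a, b)) hgate
      (by simpa [eq_comm] using hw) ⟨b, rfl⟩,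
    edist_eq_one_iff_adj.mpr (corona_adj_inl_inr (p := (a, b)) |>.mpr rfl)]

lemma corona_dist_inr_eq_of_forall_ne {a : α} {w : α ⊕ α × β} (hw : ∀ c, w ≠ .inr (a, c))
    (b b' : β) : (corona G H).dist w (.inr (a, b)) = (corona G H).dist w (.inr (a, b')) :=
  congrArg ENat.toNat ((corona_edist_inr hw b).trans (corona_edist_inr hw b').symm)

lemma corona_dist_inr_of_reachable {a : α} {w : α ⊕ α × β} (hw : ∀ c, w ≠ .inr (a, c))
    (hr : (corona G H).Reachable w (.inl a)) (b : β) :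
    (corona G H).dist w (.inr (a, b)) = (corona G H).dist w (.inl a) + 1 := by
  have hr' : (corona G H).Reachable w (.inr (a, b)) := hr.trans (Adj.reachable (by simp))
  rw [← Nat.cast_inj (R := ℕ∞), Nat.cast_add, hr.coe_dist_eq_edist, hr'.coe_dist_eq_edist,
    corona_edist_inr hw, Nat.cast_one]

lemma connected_corona (hG : G.Connected) : (corona G H).Connected := by
  let f : G →g corona G H := ⟨Sum.inl, corona_adj_inl_inl.mpr⟩
  have hleaf : ∀ x, ∃ a, (corona G H).Reachable x (.inl a) := by
    rintro (a | p)
    exacts [⟨a, .rfl⟩, ⟨p.1, Adj.reachable (by simp)⟩]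
  refine (connected_iff_exists_forall_reachable _).mpr ⟨.inl hG.nonempty.some, fun x => ?_⟩
  obtain ⟨a, hx⟩ := hleaf x
  exact ((hG.preconnected _ a).map f).trans hx.symm

end CoronaMetric

section LocalMetricGenerator
open Finset

lemma localMetricDim_le {G : SimpleGraph V} {S : Finset V} (hS : IsLocalMetricGenerator G S) :
    localMetricDim G ≤ #S :=
  Nat.sInf_le ⟨S, rfl, hS⟩

lemma le_localMetricDim {G : SimpleGraph V} {m : ℕ}
    (hne : ∃ S : Finset V, IsLocalMetricGenerator G S)
    (h : ∀ S : Finset V, IsLocalMetricGenerator G S → m ≤ #S) : m ≤ localMetricDim G := by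
  obtain ⟨S, hS⟩ := hne
  exact le_csInf ⟨_, S, rfl, hS⟩ (by rintro _ ⟨S, rfl, hS⟩; exact h S hS)

lemma dist_self_ne_dist_of_adj {G : SimpleGraph V} {x y : V} (h : G.Adj x y) :
    G.dist x x ≠ G.dist x y := by
  simp [dist_eq_one_iff_adj.mpr h]

variable {G : SimpleGraph α} {H : SimpleGraph β}

lemma exists_some_mem_dist_ne_of_adj {S : Finset (Option β)}
    (hS : IsLocalMetricGenerator (joinK1 H) S) {b b' : β} (h : H.Adj b b') :
    ∃ c, some c ∈ S ∧ (joinK1 H).dist (some c) (some b) ≠ (joinK1 H).dist (some c) (some b') := by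
  obtain ⟨_ | c, hc, hne⟩ := hS _ _ (joinK1_adj_some_some.mpr h)
  · simp [joinK1_dist_none_some] at hne
  · exact ⟨c, hc, hne⟩

def coronaLift (α : Type*) [Fintype α] (B : Finset β) : Finset (α ⊕ α × β) :=
  (univ ×ˢ B).map .inr

@[simp] lemma inr_mem_coronaLift [Fintype α] {B : Finset β} {p : α × β} :
    .inr p ∈ coronaLift α B ↔ p.2 ∈ B := by
  simp [coronaLift]

lemma card_coronaLift [Fintype α] (B : Finset β) :
    #(coronaLift α B) = Fintype.card α * #B := by
  simp [coronaLift]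

theorem isLocalMetricGenerator_coronaLift [Fintype α] [Nontrivial α] (hG : G.Connected)
    {S : Finset (Option β)} (hS : IsLocalMetricGenerator (joinK1 H) S) (hH : ∃ x y, H.Adj x y) :
    IsLocalMetricGenerator (corona G H) (coronaLift α S.eraseNone) := by
  obtain ⟨b₀, b₁, hb⟩ := hH
  obtain ⟨c₀, hc₀, -⟩ := exists_some_mem_dist_ne_of_adj hS hb
  have hmem : ∀ a, (.inr (a, c₀) : α ⊕ α × β) ∈ (coronaLift α S.eraseNone : Set _) := by
    simpa using hc₀
  have hleaf : ∀ a b, ∃ v ∈ (coronaLift α S.eraseNone : Set _),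
      (corona G H).dist v (.inl a) ≠ (corona G H).dist v (.inr (a, b)) := by
    intro a b
    obtain ⟨a', ha'⟩ := exists_ne a
    refine ⟨.inr (a', c₀), hmem a', ?_⟩
    rw [corona_dist_inr_of_reachable (by simpa using ha') ((connected_corona hG).preconnected _ _)]
    omega
  rintro (a | ⟨a, b⟩) (a' | ⟨a', b'⟩) hxy
  · refine ⟨.inr (a', c₀), hmem a', ?_⟩
    have hnear : (corona G H).dist (.inr (a', c₀)) (.inl a') = 1 :=
      dist_eq_one_iff_adj.mpr (corona_adj_inr_inl.mpr rfl)
    rw [hnear, ne_eq, dist_eq_one_iff_adj, corona_adj_inr_inl]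
    exact (corona_adj_inl_inl.mp hxy).ne
  · obtain rfl : a = a' := by simpa using hxy
    exact hleaf a b'
  · obtain rfl : a' = a := by simpa using hxy
    obtain ⟨v, hv, hne⟩ := hleaf a' b
    exact ⟨v, hv, hne.symm⟩
  · obtain ⟨rfl, hbb'⟩ : a = a' ∧ H.Adj b b' := by simpa using hxy
    obtain ⟨c, hc, hne⟩ := exists_some_mem_dist_ne_of_adj hS hbb'
    refine ⟨.inr (a, c), by simpa using hc, ?_⟩
    rwa [corona_dist_inr_inr, corona_dist_inr_inr]

def coronaCopyTrace [Fintype β] [DecidableEq α] [DecidableEq β] (W : Finset (α ⊕ α × β)) (a : α) :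
    Finset β :=
  {b | .inr (a, b) ∈ W}

lemma sum_card_coronaCopyTrace_le [Fintype α] [Fintype β] [DecidableEq α] [DecidableEq β]
    (W : Finset (α ⊕ α × β)) :
    ∑ a, #(coronaCopyTrace W a) ≤ #W :=
  calc ∑ a, #(coronaCopyTrace W a) = #({p : α × β | .inr p ∈ W}) := by
        simp only [coronaCopyTrace, card_filter, Fintype.sum_prod_type]
    _ ≤ #W := card_le_card_of_injOn Sum.inr (fun p hp => by simpa using hp)
        Sum.inr_injective.injOn

theorem isLocalMetricGenerator_insertNone_coronaCopyTrace [Fintype β] [DecidableEq α]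
    [DecidableEq β] {W : Finset (α ⊕ α × β)}
    (hW : IsLocalMetricGenerator (corona G H) W) (a : α) :
    IsLocalMetricGenerator (joinK1 H) (insertNone (coronaCopyTrace W a)) := by
  rintro (_ | b) y hxy
  · exact ⟨none, by simp, dist_self_ne_dist_of_adj hxy⟩
  obtain _ | b' := y
  · exact ⟨none, by simp, (dist_self_ne_dist_of_adj hxy.symm).symm⟩
  obtain ⟨w, hw, hne⟩ := hW (.inr (a, b)) (.inr (a, b')) (by simpa using hxy)
  by_cases hcopy : ∃ c, w = .inr (a, c)
  · obtain ⟨c, rfl⟩ := hcopy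
    refine ⟨some c, by simpa [coronaCopyTrace] using hw, ?_⟩
    rwa [corona_dist_inr_inr, corona_dist_inr_inr] at hne
  · exact absurd (corona_dist_inr_eq_of_forall_ne (fun c h => hcopy ⟨c, h⟩) b b') hne

theorem card_mul_localMetricDim_joinK1_sub_one_le [Fintype α] [Fintype β]
    {W : Finset (α ⊕ α × β)} (hW : IsLocalMetricGenerator (corona G H) W) :
    Fintype.card α * (localMetricDim (joinK1 H) - 1) ≤ #W := by
  classical
  calc Fintype.card α * (localMetricDim (joinK1 H) - 1)
      _ = ∑ _a : α, (localMetricDim (joinK1 H) - 1) := by simp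
      _ ≤ ∑ a, #(coronaCopyTrace W a) := by
        gcongr with a
        have := localMetricDim_le (isLocalMetricGenerator_insertNone_coronaCopyTrace hW a)
        rw [card_insertNone] at this
        omega
      _ ≤ #W := sum_card_coronaCopyTrace_le W

end LocalMetricGenerator

end

/-- If `H` is non-empty and the vertex of `K₁` is in some local metric basis of
`K₁ + H`, then `dim_l (G ⊙ H) = n ⬝ (dim_l (K₁ + H) - 1)` for connected `G` of order `n ≥ 2`. -/
theorem stmt5 {α β : Type*} [Fintype α] [Fintype β] (G : SimpleGraph α) (H : SimpleGraph β)
    (hG : G.Connected) (hn : 2 ≤ Fintype.card α) (hH : ∃ x y, H.Adj x y)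
    (hv : ∃ S : Finset (Option β), IsLocalMetricBasis (joinK1 H) S ∧ none ∈ S) :
    localMetricDim (corona G H) = Fintype.card α * (localMetricDim (joinK1 H) - 1) := by
  obtain ⟨S, ⟨hS, hScard⟩, hnone⟩ := hv
  have : Nontrivial α := Fintype.one_lt_card_iff_nontrivial.mp hn
  have hT := isLocalMetricGenerator_coronaLift hG hS hH
  refine le_antisymm ?_
    (le_localMetricDim ⟨_, hT⟩ fun _ => card_mul_localMetricDim_joinK1_sub_one_le)
  calc localMetricDim (corona G H) ≤ (coronaLift α S.eraseNone).card := localMetricDim_le hT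
    _ = _ := by rw [card_coronaLift, Finset.card_eraseNone_of_mem hnone, hScard]
end
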